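/- Two-sided fidelity characterization of the sample complexity of symmetric binary quantum hypothesis testing: Let ρ, σ be quantum states on ℂ^d with ρ ≠ σ and ρσ ≠ 0, let p ∈ (0,1), q := 1 − p, and let ε ∈ (0, min{p,q}). Then ln(pq/ε)/(−ln F_H(ρ,σ)) ≤ n*(p,ρ,q,σ,ε) ≤ ⌈ ln(√(pq)/ε) / (−(1/2)·ln F_H(ρ,σ)) ⌉, and likewise ln(pq/ε)/(−ln F(ρ,σ)) ≤ n*(p,ρ,q,σ,ε) ≤ ⌈ ln(√(pq)/ε) / (−(1/2)·ln F(ρ,σ)) ⌉. -/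

import Mathlib

open scoped ComplexOrder Classical

noncomputable section

namespace QHT

variable {ι : Type*} [Fintype ι] [DecidableEq ι]

/-- Trace norm of a complex matrix: `Tr[√(Aᴴ A)]`. -/
def traceNorm (A : Matrix ι ι ℂ) : ℝ :=
  (((Matrix.posSemidef_conjTranspose_mul_self A).1.eigenvectorUnitary : Matrix ι ι ℂ) *
    Matrix.diagonal ((fun x : ℝ => (x : ℂ)) ∘ (Real.sqrt ·) ∘ (Matrix.posSemidef_conjTranspose_mul_self A).1.eigenvalues) *
    (star (Matrix.posSemidef_conjTranspose_mul_self A).1.eigenvectorUnitary : Matrix ι ι ℂ)).trace.re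

/-- A quantum state: positive semidefinite with unit trace. -/
def IsState (ρ : Matrix ι ι ℂ) : Prop := ρ.PosSemidef ∧ ρ.trace = 1

/-- Positive semidefinite square root (junk value `0` off the PSD matrices). -/
def matSqrt (A : Matrix ι ι ℂ) : Matrix ι ι ℂ :=
  if h : A.PosSemidef then
    (h.1.eigenvectorUnitary : Matrix ι ι ℂ) *
      Matrix.diagonal ((fun x : ℝ => (x : ℂ)) ∘ (Real.sqrt ·) ∘ h.1.eigenvalues) *
      (star h.1.eigenvectorUnitary : Matrix ι ι ℂ)
  else 0

/-- Real power of a Hermitian matrix, applying `x ↦ x ^ s` to positive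
eigenvalues and `x ↦ 0` to the remaining ones (so `A ^ 0` is the support
projection); junk value `0` off the Hermitian matrices. -/
def matRpow (A : Matrix ι ι ℂ) (s : ℝ) : Matrix ι ι ℂ :=
  if h : A.IsHermitian then
    (h.eigenvectorUnitary : Matrix ι ι ℂ) *
      Matrix.diagonal (fun i =>
        ((if 0 < h.eigenvalues i then (h.eigenvalues i) ^ s else 0 : ℝ) : ℂ)) *
      (star (h.eigenvectorUnitary : Matrix ι ι ℂ))
  else 0

/-- Fidelity `F(ρ,σ) = ‖√ρ √σ‖₁²`. -/
def Fid (ρ σ : Matrix ι ι ℂ) : ℝ := (traceNorm (matSqrt ρ * matSqrt σ)) ^ 2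

/-- Holevo fidelity `F_H(ρ,σ) = (Tr[√ρ √σ])²`. -/
def FidH (ρ σ : Matrix ι ι ℂ) : ℝ := (((matSqrt ρ * matSqrt σ).trace).re) ^ 2

/-- `Q_s(A‖B) = Tr[A^s B^{1-s}]`. -/
def Qs (s : ℝ) (A B : Matrix ι ι ℂ) : ℝ := ((matRpow A s * matRpow B (1 - s)).trace).re

/-- `Q_min(A‖B) = min_{s ∈ [0,1]} Q_s(A‖B)`. -/
def Qmin (A B : Matrix ι ι ℂ) : ℝ :=
  sInf { x : ℝ | ∃ s ∈ Set.Icc (0 : ℝ) 1, x = Qs s A B }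

/-- Bures distance. -/
def dB (ρ σ : Matrix ι ι ℂ) : ℝ := Real.sqrt (2 * (1 - Real.sqrt (Fid ρ σ)))

/-- Quantum Hellinger distance. -/
def dH (ρ σ : Matrix ι ι ℂ) : ℝ := Real.sqrt (2 * (1 - Real.sqrt (FidH ρ σ)))

/-- `n`-fold Kronecker (tensor) power of a matrix. -/
def tensorPow {d : ℕ} (A : Matrix (Fin d) (Fin d) ℂ) (n : ℕ) :
    Matrix (Fin n → Fin d) (Fin n → Fin d) ℂ :=
  Matrix.of fun i j => ∏ k, A (i k) (j k)

/-- Optimal error probability of symmetric binary quantum hypothesis testing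
with `n` copies. -/
def pErr {d : ℕ} (p : ℝ) (ρ : Matrix (Fin d) (Fin d) ℂ) (q : ℝ)
    (σ : Matrix (Fin d) (Fin d) ℂ) (n : ℕ) : ℝ :=
  sInf { x : ℝ | ∃ Λ : Matrix (Fin n → Fin d) (Fin n → Fin d) ℂ,
    Λ.PosSemidef ∧ (1 - Λ).PosSemidef ∧
    x = p * (((1 - Λ) * tensorPow ρ n).trace).re + q * ((Λ * tensorPow σ n).trace).re }

/-- Sample complexity of symmetric binary quantum hypothesis testing. -/
def sampleComplexity {d : ℕ} (p : ℝ) (ρ : Matrix (Fin d) (Fin d) ℂ) (q : ℝ)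
    (σ : Matrix (Fin d) (Fin d) ℂ) (ε : ℝ) : ℕ :=
  sInf { n : ℕ | 1 ≤ n ∧ pErr p ρ q σ n ≤ ε }

/-- Optimal type II error `β_ε(ρ‖σ)` of asymmetric hypothesis testing. -/
def betaErr (ε : ℝ) (ρ σ : Matrix ι ι ℂ) : ℝ :=
  sInf { x : ℝ | ∃ Λ : Matrix ι ι ℂ, Λ.PosSemidef ∧ (1 - Λ).PosSemidef ∧
    (((1 - Λ) * ρ).trace).re ≤ ε ∧ x = ((Λ * σ).trace).re }

/-- Sample complexity of asymmetric binary quantum hypothesis testing. -/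
def sampleComplexityAsym {d : ℕ} (ρ σ : Matrix (Fin d) (Fin d) ℂ) (ε δ : ℝ) : ℕ :=
  sInf { n : ℕ | 1 ≤ n ∧ betaErr ε (tensorPow ρ n) (tensorPow σ n) ≤ δ }

/-- Petz–Rényi divergence `D_α(ρ‖σ)`. -/
def petzRenyi (α : ℝ) (ρ σ : Matrix ι ι ℂ) : ℝ :=
  (1 / (α - 1)) * Real.log (((matRpow ρ α * matRpow σ (1 - α)).trace).re)

/-- Sandwiched Rényi divergence `D̃_α(ρ‖σ)`. -/
def sandwichedRenyi (α : ℝ) (ρ σ : Matrix ι ι ℂ) : ℝ :=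
  (1 / (α - 1)) * Real.log
    (((matRpow (matRpow σ ((1 - α) / (2 * α)) * ρ * matRpow σ ((1 - α) / (2 * α))) α).trace).re)


/-! The optimal error is squeezed between two exponentials in `n`. Above: the Helstrom test
`{pρ^{⊗n} - qσ^{⊗n} > 0}` errs with probability at most `Tr[√(pρ^{⊗n}) √(qσ^{⊗n})] = √(pq) √F_H^n`
(Audenaert's inequality at `s = 1/2`, by the Powers–Størmer argument). Below: data processing for
the fidelity under the two-outcome measurement `{Λ, 1 - Λ}` gives `√F^n ≤ √α + √β` for the two
error probabilities `α, β` of any test, so that the test errs with probability at least `pq F^n`. As `F_H ≤ F`, both bounds hold for either fidelity, and taking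
logarithms turns them into the bounds on `n*`. Finally `0 < F_H` because `ρσ ≠ 0`, and `F < 1`
because `ρ ≠ σ`: at `p = q = 1/2` the two bounds give `F^n / 4 ≤ √F_H^n / 2` for all `n`. -/

open scoped MatrixOrder
open Matrix

theorem _root_.Real.sqrt_pow {x : ℝ} (hx : 0 ≤ x) (n : ℕ) : √(x ^ n) = √x ^ n := by
  rw [Real.sqrt_eq_iff_mul_self_eq (pow_nonneg hx n) (pow_nonneg (Real.sqrt_nonneg x) n),
    ← mul_pow, Real.mul_self_sqrt hx]

theorem _root_.Complex.re_pow_of_nonneg {z : ℂ} (hz : 0 ≤ z) (n : ℕ) : (z ^ n).re = z.re ^ n := by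
  obtain ⟨r, rfl⟩ : ∃ r : ℝ, (r : ℂ) = z :=
    ⟨z.re, (Complex.eq_re_of_ofReal_le (r := 0) (by simpa using hz)).symm⟩
  rw [← Complex.ofReal_pow, Complex.ofReal_re, Complex.ofReal_re]

section CauchySchwarz

variable {κ μ : Type*} [Fintype μ]

theorem re_conjTranspose_mul_self_apply (X : Matrix μ κ ℂ) (i : κ) :
    ((Xᴴ * X) i i).re = ∑ k, ‖X k i‖ ^ 2 := by
  simp [mul_apply, Complex.conj_mul', ← Complex.ofReal_pow]

theorem re_conjTranspose_mul_apply_le (X Y : Matrix μ κ ℂ) (i : κ) :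
    ((Xᴴ * Y) i i).re ≤ √((Xᴴ * X) i i).re * √((Yᴴ * Y) i i).re := by
  rw [re_conjTranspose_mul_self_apply, re_conjTranspose_mul_self_apply, mul_apply, Complex.re_sum]
  refine (Finset.sum_le_sum fun k _ => ?_).trans
    (Real.sum_mul_le_sqrt_mul_sqrt _ (fun k => ‖X k i‖) fun k => ‖Y k i‖)
  simpa using Complex.re_le_norm (star (X k i) * Y k i)

theorem re_trace_conjTranspose_mul_le [Fintype κ] (X Y : Matrix μ κ ℂ) :
    (Xᴴ * Y).trace.re ≤ √(Xᴴ * X).trace.re * √(Yᴴ * Y).trace.re := by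
  simp only [trace, diag, Complex.re_sum]
  refine (Finset.sum_le_sum fun i _ => re_conjTranspose_mul_apply_le X Y i).trans
    (Real.sum_sqrt_mul_sqrt_le _ (fun i => ?_) fun i => ?_) <;>
  · rw [re_conjTranspose_mul_self_apply]; positivity

end CauchySchwarz

section Positivity

theorem continuousOn_spectrum (A : Matrix ι ι ℂ) (f : ℝ → ℝ) : ContinuousOn f (spectrum ℝ A) :=
  finite_real_spectrum.continuousOn f

theorem cfc_mul_id (f : ℝ → ℝ) {H : Matrix ι ι ℂ} (hH : IsSelfAdjoint H) :
    cfc f H * H = cfc (fun x => f x * x) H := by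
  conv_lhs => arg 2; rw [← cfc_id' ℝ H]
  exact (cfc_mul _ _ H (continuousOn_spectrum H f) (continuousOn_spectrum H _)).symm

theorem matSqrt_eq_sqrt {A : Matrix ι ι ℂ} (hA : 0 ≤ A) : matSqrt A = CFC.sqrt A := by
  rw [matSqrt, dif_pos (nonneg_iff_posSemidef.mp hA), CFC.sqrt_eq_real_sqrt A hA, cfcₙ_eq_cfc,
    (nonneg_iff_posSemidef.mp hA).1.cfc_eq]
  rfl

theorem sqrt_smul {r : ℝ} (hr : 0 ≤ r) {A : Matrix ι ι ℂ} (hA : 0 ≤ A) :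
    CFC.sqrt (r • A) = √r • CFC.sqrt A := by
  refine CFC.sqrt_unique ?_ (smul_nonneg (Real.sqrt_nonneg r) (CFC.sqrt_nonneg A))
  rw [smul_mul_smul, Real.mul_self_sqrt hr, CFC.sqrt_mul_sqrt_self A hA]

theorem trace_mul_nonneg {A B : Matrix ι ι ℂ} (hA : 0 ≤ A) (hB : 0 ≤ B) :
    0 ≤ (A * B).trace := by
  have h : (A * B).trace = (CFC.sqrt A * B * CFC.sqrt A).trace := by
    rw [trace_mul_cycle, CFC.sqrt_mul_sqrt_self A hA]
  rw [h]
  exact (nonneg_iff_posSemidef.mp (conjugate_nonneg_of_nonneg hB (CFC.sqrt_nonneg A))).trace_nonneg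

theorem re_trace_mul_nonneg {A B : Matrix ι ι ℂ} (hA : 0 ≤ A) (hB : 0 ≤ B) :
    0 ≤ (A * B).trace.re :=
  (Complex.nonneg_iff.mp (trace_mul_nonneg hA hB)).1

theorem re_trace_mul_le_re_trace_mul {A B C : Matrix ι ι ℂ} (hAB : A ≤ B) (hC : 0 ≤ C) :
    (A * C).trace.re ≤ (B * C).trace.re := by
  have h := re_trace_mul_nonneg (sub_nonneg.mpr hAB) hC
  rwa [sub_mul, trace_sub, Complex.sub_re, sub_nonneg] at h

theorem mul_eq_zero_of_trace_mul_eq_zero {A B : Matrix ι ι ℂ} (hA : 0 ≤ A) (hB : 0 ≤ B)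
    (h : (A * B).trace = 0) : A * B = 0 := by
  set a := CFC.sqrt A
  set b := CFC.sqrt B
  have ha : aᴴ = a := (CFC.sqrt_nonneg A).isSelfAdjoint
  have hb : bᴴ = b := (CFC.sqrt_nonneg B).isSelfAdjoint
  have hab : a * b = 0 := by
    rw [← trace_conjTranspose_mul_self_eq_zero_iff, conjTranspose_mul, ha, hb, ← h,
      ← CFC.sqrt_mul_sqrt_self A hA, ← CFC.sqrt_mul_sqrt_self B hB,
      show b * a * (a * b) = b * (a * a * b) by noncomm_ring, trace_mul_comm, mul_assoc]
  rw [← CFC.sqrt_mul_sqrt_self A hA, ← CFC.sqrt_mul_sqrt_self B hB]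
  calc a * a * (b * b) = a * (a * b) * b := by noncomm_ring
    _ = 0 := by rw [hab, mul_zero, zero_mul]

theorem two_mul_re_trace_mul_lt_of_ne {a b : Matrix ι ι ℂ} (ha : IsSelfAdjoint a)
    (hb : IsSelfAdjoint b) (hab : a ≠ b) :
    2 * (a * b).trace.re < (a * a).trace.re + (b * b).trace.re := by
  have hnn := Complex.nonneg_iff.mp (posSemidef_conjTranspose_mul_self (a - b)).trace_nonneg
  have hpos : 0 < ((a - b)ᴴ * (a - b)).trace.re :=
    hnn.1.lt_of_ne fun h0 => hab <| sub_eq_zero.mp <|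
      trace_conjTranspose_mul_self_eq_zero_iff.mp (Complex.ext h0.symm hnn.2.symm)
  have hexp : (a - b)ᴴ * (a - b) = a * a + b * b - (a * b + b * a) := by
    rw [conjTranspose_sub, show aᴴ = a from ha, show bᴴ = b from hb]
    noncomm_ring
  rw [hexp, trace_sub, trace_add, trace_add, trace_mul_comm b a] at hpos
  simp only [Complex.sub_re, Complex.add_re] at hpos
  linarith

end Positivity

section Helstrom

/-- The projection `{H > 0}`. -/
def posSpectralProj (H : Matrix ι ι ℂ) : Matrix ι ι ℂ :=
  cfc (fun x : ℝ => if 0 < x then (1 : ℝ) else 0) H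

variable {H : Matrix ι ι ℂ}

theorem posSpectralProj_nonneg : 0 ≤ posSpectralProj H :=
  cfc_nonneg fun x _ => by split_ifs <;> norm_num

theorem posSpectralProj_le_one : posSpectralProj H ≤ 1 :=
  cfc_le_one _ H fun x _ => by split_ifs <;> norm_num

theorem commute_posSpectralProj : Commute (posSpectralProj H) H :=
  (Commute.refl H).cfc_real _

theorem posSpectralProj_mul_nonneg (hH : IsSelfAdjoint H) : 0 ≤ posSpectralProj H * H := by
  rw [posSpectralProj, cfc_mul_id _ hH]
  exact cfc_nonneg fun x _ => by split_ifs with hx <;> linarith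

theorem one_sub_posSpectralProj_mul_nonpos (hH : IsSelfAdjoint H) :
    (1 - posSpectralProj H) * H ≤ 0 := by
  rw [sub_mul, one_mul, sub_nonpos, posSpectralProj, cfc_mul_id _ hH]
  conv_lhs => rw [← cfc_id' ℝ H]
  exact cfc_mono (fun x _ => by split_ifs with hx <;> linarith) (continuousOn_spectrum H _)
    (continuousOn_spectrum H _)

theorem re_trace_mul_le_re_trace_posSpectralProj_mul (hH : IsSelfAdjoint H)
    {Λ : Matrix ι ι ℂ} (hΛ₀ : 0 ≤ Λ) (hΛ₁ : Λ ≤ 1) :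
    (Λ * H).trace.re ≤ (posSpectralProj H * H).trace.re := by
  set P := posSpectralProj H
  have hpos := re_trace_mul_nonneg (sub_nonneg.mpr hΛ₁) (posSpectralProj_mul_nonneg hH)
  have hneg := re_trace_mul_nonneg hΛ₀ (neg_nonneg.mpr (one_sub_posSpectralProj_mul_nonpos hH))
  have h : P * H - Λ * H = (1 - Λ) * (P * H) + Λ * -((1 - P) * H) := by noncomm_ring
  have h' := congrArg (fun X => X.trace.re) h
  simp only [trace_sub, trace_add, Complex.sub_re, Complex.add_re] at h'
  linarith

/-- Audenaert's inequality at `s = 1/2` for the Helstrom test, after Powers–Størmer: with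
`H = a - b` and `K = a + b` one has `2 (a² - b²) = H K + K H`, and `{H > 0}` bounds
`Tr[a H] = Tr[a²] - Tr[a b]` by `Tr[K (H)₊]`. -/
theorem re_trace_mul_self_sub_le_re_trace_mul {a b : Matrix ι ι ℂ} (ha : 0 ≤ a) (hb : 0 ≤ b) :
    (a * a).trace.re - (posSpectralProj (a * a - b * b) * (a * a - b * b)).trace.re
      ≤ (a * b).trace.re := by
  set P := posSpectralProj (a - b)
  have hH : IsSelfAdjoint (a - b) := ha.isSelfAdjoint.sub hb.isSelfAdjoint
  have hsq : IsSelfAdjoint (a * a - b * b) := by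
    simp [IsSelfAdjoint, ha.isSelfAdjoint.star_eq, hb.isSelfAdjoint.star_eq]
  have hneg : (a * ((1 - P) * (a - b))).trace.re ≤ 0 := by
    have h := re_trace_mul_nonneg ha (neg_nonneg.mpr (one_sub_posSpectralProj_mul_nonpos hH))
    rwa [mul_neg, trace_neg, Complex.neg_re, neg_nonneg] at h
  have hb_pos := re_trace_mul_nonneg hb (posSpectralProj_mul_nonneg hH)
  have hopt := re_trace_mul_le_re_trace_posSpectralProj_mul (Λ := P) hsq posSpectralProj_nonneg
    posSpectralProj_le_one
  have hsym : (P * (a * a - b * b)).trace = ((a + b) * (P * (a - b))).trace := by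
    have h2 : P * (a * a - b * b) + P * (a * a - b * b)
        = P * (a - b) * (a + b) + P * ((a + b) * (a - b)) := by
      noncomm_ring
    have h3 : (P * ((a + b) * (a - b))).trace = (P * (a - b) * (a + b)).trace := by
      rw [← mul_assoc, trace_mul_cycle, ← commute_posSpectralProj.eq, mul_assoc]
    have h4 := congrArg trace h2
    rw [trace_add, trace_add, h3, ← two_mul, ← two_mul, trace_mul_comm (P * (a - b))] at h4
    exact mul_left_cancel₀ two_ne_zero h4
  have hsplit : (a * a).trace.re - (a * b).trace.re
      = (a * (P * (a - b))).trace.re + (a * ((1 - P) * (a - b))).trace.re := by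
    rw [← Complex.sub_re, ← trace_sub, ← Complex.add_re, ← trace_add]
    congr 2
    noncomm_ring
  calc (a * a).trace.re - (posSpectralProj (a * a - b * b) * (a * a - b * b)).trace.re
      ≤ (a * a).trace.re - (P * (a * a - b * b)).trace.re := by linarith
    _ = (a * a).trace.re - (a * (P * (a - b))).trace.re - (b * (P * (a - b))).trace.re := by
      rw [hsym, add_mul, trace_add, Complex.add_re]; ring
    _ ≤ (a * b).trace.re := by linarith

theorem exists_test_le_re_trace_sqrt_mul_sqrt {A B : Matrix ι ι ℂ} (hA : 0 ≤ A) (hB : 0 ≤ B) :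
    ∃ Λ : Matrix ι ι ℂ, 0 ≤ Λ ∧ Λ ≤ 1 ∧
      ((1 - Λ) * A).trace.re + (Λ * B).trace.re ≤ (CFC.sqrt A * CFC.sqrt B).trace.re := by
  refine ⟨posSpectralProj (A - B), posSpectralProj_nonneg, posSpectralProj_le_one, ?_⟩
  have h := re_trace_mul_self_sub_le_re_trace_mul (CFC.sqrt_nonneg A) (CFC.sqrt_nonneg B)
  rw [CFC.sqrt_mul_sqrt_self A hA, CFC.sqrt_mul_sqrt_self B hB] at h
  refine le_of_eq_of_le ?_ h
  rw [sub_mul, one_mul, mul_sub, trace_sub, trace_sub, Complex.sub_re, Complex.sub_re]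
  ring

end Helstrom

section TraceNorm

theorem traceNorm_eq_re_trace_abs (A : Matrix ι ι ℂ) : traceNorm A = (CFC.abs A).trace.re := by
  rw [traceNorm, CFC.abs, CFC.sqrt_eq_real_sqrt _ (star_mul_self_nonneg A), cfcₙ_eq_cfc]
  exact congrArg (fun M => M.trace.re) ((posSemidef_conjTranspose_mul_self A).1.cfc_eq _).symm

theorem traceNorm_nonneg (M : Matrix ι ι ℂ) : 0 ≤ traceNorm M := by
  rw [traceNorm_eq_re_trace_abs]
  exact (Complex.nonneg_iff.mp (nonneg_iff_posSemidef.mp (CFC.abs_nonneg M)).trace_nonneg).1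

theorem re_trace_le_traceNorm (M : Matrix ι ι ℂ) : M.trace.re ≤ traceNorm M := by
  set hC := (posSemidef_conjTranspose_mul_self M).1
  set U : Matrix ι ι ℂ := (hC.eigenvectorUnitary : Matrix ι ι ℂ)
  have hUU : Uᴴ * U = 1 := Unitary.coe_star_mul_self _
  have hUU' : U * Uᴴ = 1 := Unitary.coe_mul_star_self _
  have hdiag : (M * U)ᴴ * (M * U) = diagonal (RCLike.ofReal ∘ hC.eigenvalues) := by
    rw [← hC.conjStarAlgAut_star_eigenvectorUnitary, Unitary.conjStarAlgAut_star_apply,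
      conjTranspose_mul]
    simp only [mul_assoc, U, star_eq_conjTranspose]
  have htn : traceNorm M = ∑ i, √(hC.eigenvalues i) := by
    rw [traceNorm, trace_mul_cycle, Unitary.coe_star_mul_self, one_mul, trace_diagonal,
      Complex.re_sum]
    rfl
  calc M.trace.re = (Uᴴ * (M * U)).trace.re := by rw [trace_mul_comm, mul_assoc, hUU', mul_one]
    _ = ∑ i, ((Uᴴ * (M * U)) i i).re := by simp [trace, Complex.re_sum]
    _ ≤ ∑ i, √((Uᴴ * U) i i).re * √(((M * U)ᴴ * (M * U)) i i).re :=
      Finset.sum_le_sum fun i _ => re_conjTranspose_mul_apply_le U (M * U) i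
    _ = traceNorm M := by rw [hUU, hdiag, htn]; simp

/-- `W = (Mᴴ M)^{-1/2} Mᴴ` from the polar decomposition; the inverse square root is taken on the
support of `Mᴴ M` only, because `(√x)⁻¹ = 0` for `x ≤ 0`. -/
theorem exists_mul_conjTranspose_le_one_traceNorm_eq (M : Matrix ι ι ℂ) :
    ∃ W : Matrix ι ι ℂ, W * Wᴴ ≤ 1 ∧ traceNorm M = (W * M).trace.re := by
  set C := Mᴴ * M
  have hC : IsSelfAdjoint C := (star_mul_self_nonneg M).isSelfAdjoint
  set g : ℝ → ℝ := fun x => (√x)⁻¹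
  have hg : (cfc g C)ᴴ = cfc g C := (cfc_predicate g C).star_eq
  refine ⟨cfc g C * Mᴴ, ?_, ?_⟩
  · rw [conjTranspose_mul, conjTranspose_conjTranspose, hg, mul_assoc, ← mul_assoc Mᴴ,
      ← mul_assoc, cfc_mul_id g hC,
      ← cfc_mul _ _ C (continuousOn_spectrum C _) (continuousOn_spectrum C _)]
    refine cfc_le_one _ C fun x _ => ?_
    rcases le_or_gt x 0 with hx | hx
    · simp [g, Real.sqrt_eq_zero'.mpr hx]
    · have := Real.sq_sqrt hx.le
      simp only [g]
      field_simp
      linarith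
  · rw [traceNorm_eq_re_trace_abs, CFC.abs, CFC.sqrt_eq_real_sqrt _ (star_mul_self_nonneg M),
      cfcₙ_eq_cfc, mul_assoc, cfc_mul_id g hC]
    congr 3
    funext x
    simp only [g, inv_mul_eq_div, Real.div_sqrt]

theorem re_trace_mul_mul_mul_le_sqrt {a b E W : Matrix ι ι ℂ} (ha : 0 ≤ a) (hb : 0 ≤ b)
    (hE : 0 ≤ E) (hW : W * Wᴴ ≤ 1) :
    (W * (a * E * b)).trace.re ≤ √((E * (a * a)).trace.re * (E * (b * b)).trace.re) := by
  obtain ⟨e, he, rfl⟩ : ∃ e, 0 ≤ e ∧ e * e = E :=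
    ⟨CFC.sqrt E, CFC.sqrt_nonneg E, CFC.sqrt_mul_sqrt_self E hE⟩
  have ha' : aᴴ = a := ha.isSelfAdjoint
  have hb' : bᴴ = b := hb.isSelfAdjoint
  have he' : eᴴ = e := he.isSelfAdjoint
  have hcs := re_trace_conjTranspose_mul_le (e * a) (e * b * W)
  have hX : ((e * a)ᴴ * (e * a)).trace = (e * e * (a * a)).trace := by
    rw [conjTranspose_mul, ha', he', show a * e * (e * a) = a * (e * e * a) by noncomm_ring,
      trace_mul_comm, mul_assoc]
  have hY : ((e * b * W)ᴴ * (e * b * W)).trace.re ≤ (e * e * (b * b)).trace.re := by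
    have hcyc : ((e * b * W)ᴴ * (e * b * W)).trace = (W * Wᴴ * (b * (e * e) * b)).trace := by
      rw [conjTranspose_mul, conjTranspose_mul, hb', he', ← trace_mul_cycle Wᴴ]
      congr 1
      noncomm_ring
    have hEB : (e * e * (b * b)).trace = (1 * (b * (e * e) * b)).trace := by
      rw [one_mul, trace_mul_cycle b (e * e) b, trace_mul_comm]
    rw [hcyc, hEB]
    exact re_trace_mul_le_re_trace_mul hW (conjugate_nonneg_of_nonneg hE hb)
  have hXY : (W * (a * (e * e) * b)).trace = ((e * a)ᴴ * (e * b * W)).trace := by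
    rw [trace_mul_comm, conjTranspose_mul, ha', he']
    simp only [mul_assoc]
  rw [hXY, Real.sqrt_mul (re_trace_mul_nonneg hE ha.isSelfAdjoint.mul_self_nonneg)]
  rw [hX] at hcs
  exact hcs.trans (mul_le_mul_of_nonneg_left (Real.sqrt_le_sqrt hY) (Real.sqrt_nonneg _))

/-- Data processing for the fidelity `‖a b‖₁` of `a²` and `b²` under the measurement
`{Λ, 1 - Λ}`. -/
theorem traceNorm_mul_le_of_test {a b Λ : Matrix ι ι ℂ} (ha : 0 ≤ a) (hb : 0 ≤ b)
    (hΛ₀ : 0 ≤ Λ) (hΛ₁ : Λ ≤ 1) :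
    traceNorm (a * b)
      ≤ √((Λ * (a * a)).trace.re * (Λ * (b * b)).trace.re)
        + √(((1 - Λ) * (a * a)).trace.re * ((1 - Λ) * (b * b)).trace.re) := by
  obtain ⟨W, hW, h⟩ := exists_mul_conjTranspose_le_one_traceNorm_eq (a * b)
  rw [h, show a * b = a * Λ * b + a * (1 - Λ) * b by noncomm_ring, mul_add, trace_add,
    Complex.add_re]
  exact add_le_add (re_trace_mul_mul_mul_le_sqrt ha hb hΛ₀ hW)
    (re_trace_mul_mul_mul_le_sqrt ha hb (sub_nonneg.mpr hΛ₁) hW)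

end TraceNorm

section TensorPow

variable {d : ℕ}

theorem tensorPow_mul (A B : Matrix (Fin d) (Fin d) ℂ) (n : ℕ) :
    tensorPow A n * tensorPow B n = tensorPow (A * B) n := by
  ext i j
  simp only [tensorPow, mul_apply, of_apply]
  rw [Finset.prod_univ_sum, Fintype.piFinset_univ]
  exact Finset.sum_congr rfl fun x _ => Finset.prod_mul_distrib.symm

theorem star_tensorPow (A : Matrix (Fin d) (Fin d) ℂ) (n : ℕ) :
    star (tensorPow A n) = tensorPow (star A) n := by
  ext i j
  simp [tensorPow, star_apply]

theorem trace_tensorPow (A : Matrix (Fin d) (Fin d) ℂ) (n : ℕ) :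
    (tensorPow A n).trace = A.trace ^ n := by
  simp only [trace, diag, tensorPow, of_apply]
  rw [← Fin.prod_const n (∑ j, A j j), Finset.prod_univ_sum, Fintype.piFinset_univ]

theorem tensorPow_nonneg {A : Matrix (Fin d) (Fin d) ℂ} (hA : 0 ≤ A) (n : ℕ) :
    0 ≤ tensorPow A n := by
  have h : tensorPow A n = star (tensorPow (CFC.sqrt A) n) * tensorPow (CFC.sqrt A) n := by
    rw [star_tensorPow, (CFC.sqrt_nonneg A).isSelfAdjoint.star_eq, tensorPow_mul,
      CFC.sqrt_mul_sqrt_self A hA]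
  rw [h]
  exact star_mul_self_nonneg _

theorem sqrt_tensorPow {A : Matrix (Fin d) (Fin d) ℂ} (hA : 0 ≤ A) (n : ℕ) :
    CFC.sqrt (tensorPow A n) = tensorPow (CFC.sqrt A) n :=
  CFC.sqrt_unique (by rw [tensorPow_mul, CFC.sqrt_mul_sqrt_self A hA])
    (tensorPow_nonneg (CFC.sqrt_nonneg A) n)

theorem traceNorm_tensorPow (M : Matrix (Fin d) (Fin d) ℂ) (n : ℕ) :
    traceNorm (tensorPow M n) = traceNorm M ^ n := by
  have habs : CFC.abs (tensorPow M n) = tensorPow (CFC.abs M) n := by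
    rw [CFC.abs, CFC.abs, star_tensorPow, tensorPow_mul, sqrt_tensorPow (star_mul_self_nonneg M)]
  rw [traceNorm_eq_re_trace_abs, traceNorm_eq_re_trace_abs, habs, trace_tensorPow,
    Complex.re_pow_of_nonneg (nonneg_iff_posSemidef.mp (CFC.abs_nonneg M)).trace_nonneg]

theorem matSqrt_mul_matSqrt_tensorPow {ρ σ : Matrix (Fin d) (Fin d) ℂ} (hρ : 0 ≤ ρ) (hσ : 0 ≤ σ)
    (n : ℕ) : matSqrt (tensorPow ρ n) * matSqrt (tensorPow σ n)
      = tensorPow (matSqrt ρ * matSqrt σ) n := by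
  rw [matSqrt_eq_sqrt hρ, matSqrt_eq_sqrt hσ, matSqrt_eq_sqrt (tensorPow_nonneg hρ n),
    matSqrt_eq_sqrt (tensorPow_nonneg hσ n), sqrt_tensorPow hρ, sqrt_tensorPow hσ, tensorPow_mul]

theorem Fid_tensorPow {ρ σ : Matrix (Fin d) (Fin d) ℂ} (hρ : 0 ≤ ρ) (hσ : 0 ≤ σ) (n : ℕ) :
    Fid (tensorPow ρ n) (tensorPow σ n) = Fid ρ σ ^ n := by
  rw [Fid, Fid, matSqrt_mul_matSqrt_tensorPow hρ hσ, traceNorm_tensorPow, ← pow_mul, ← pow_mul,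
    mul_comm]

theorem FidH_tensorPow {ρ σ : Matrix (Fin d) (Fin d) ℂ} (hρ : 0 ≤ ρ) (hσ : 0 ≤ σ) (n : ℕ) :
    FidH (tensorPow ρ n) (tensorPow σ n) = FidH ρ σ ^ n := by
  have h := trace_mul_nonneg (matSqrt_eq_sqrt hρ ▸ CFC.sqrt_nonneg ρ)
    (matSqrt_eq_sqrt hσ ▸ CFC.sqrt_nonneg σ)
  rw [FidH, FidH, matSqrt_mul_matSqrt_tensorPow hρ hσ, trace_tensorPow, Complex.re_pow_of_nonneg h,
    ← pow_mul, ← pow_mul, mul_comm]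

theorem IsState.tensorPow {ρ : Matrix (Fin d) (Fin d) ℂ} (hρ : IsState ρ) (n : ℕ) :
    IsState (tensorPow ρ n) :=
  ⟨nonneg_iff_posSemidef.mp (tensorPow_nonneg (nonneg_iff_posSemidef.mpr hρ.1) n),
    by rw [trace_tensorPow, hρ.2, one_pow]⟩

end TensorPow

section Fidelity

theorem IsState.nonneg {κ : Type*} [Fintype κ] {ρ : Matrix κ κ ℂ} (hρ : IsState ρ) : 0 ≤ ρ :=
  nonneg_iff_posSemidef.mpr hρ.1

theorem IsState.re_trace_mul_add_re_trace_one_sub_mul {ρ : Matrix ι ι ℂ} (hρ : IsState ρ)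
    (Λ : Matrix ι ι ℂ) : (Λ * ρ).trace.re + ((1 - Λ) * ρ).trace.re = 1 := by
  rw [← Complex.add_re, ← trace_add, ← add_mul, add_sub_cancel, one_mul, hρ.2, Complex.one_re]

variable {ρ σ : Matrix ι ι ℂ}

theorem sqrt_FidH (hρ : 0 ≤ ρ) (hσ : 0 ≤ σ) :
    √(FidH ρ σ) = (matSqrt ρ * matSqrt σ).trace.re := by
  refine Real.sqrt_sq ?_
  rw [matSqrt_eq_sqrt hρ, matSqrt_eq_sqrt hσ]
  exact re_trace_mul_nonneg (CFC.sqrt_nonneg ρ) (CFC.sqrt_nonneg σ)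

theorem FidH_le_Fid (hρ : 0 ≤ ρ) (hσ : 0 ≤ σ) : FidH ρ σ ≤ Fid ρ σ := by
  have ht := re_trace_mul_nonneg (CFC.sqrt_nonneg ρ) (CFC.sqrt_nonneg σ)
  rw [← matSqrt_eq_sqrt hρ, ← matSqrt_eq_sqrt hσ] at ht
  exact pow_le_pow_left₀ ht (re_trace_le_traceNorm _) 2

theorem FidH_pos (hρ : 0 ≤ ρ) (hσ : 0 ≤ σ) (hρσ : ρ * σ ≠ 0) : 0 < FidH ρ σ := by
  rw [← Real.sqrt_pos, sqrt_FidH hρ hσ, matSqrt_eq_sqrt hρ, matSqrt_eq_sqrt hσ]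
  have h := Complex.nonneg_iff.mp (trace_mul_nonneg (CFC.sqrt_nonneg ρ) (CFC.sqrt_nonneg σ))
  refine h.1.lt_of_ne fun h0 => hρσ ?_
  have hab := mul_eq_zero_of_trace_mul_eq_zero (CFC.sqrt_nonneg ρ) (CFC.sqrt_nonneg σ)
    (Complex.ext h0.symm h.2.symm)
  rw [← CFC.sqrt_mul_sqrt_self ρ hρ, ← CFC.sqrt_mul_sqrt_self σ hσ,
    show CFC.sqrt ρ * CFC.sqrt ρ * (CFC.sqrt σ * CFC.sqrt σ)
      = CFC.sqrt ρ * (CFC.sqrt ρ * CFC.sqrt σ) * CFC.sqrt σ by noncomm_ring,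
    hab, mul_zero, zero_mul]

theorem FidH_lt_one (hρ : IsState ρ) (hσ : IsState σ) (hne : ρ ≠ σ) : FidH ρ σ < 1 := by
  have ha := CFC.sqrt_nonneg ρ
  have hb := CFC.sqrt_nonneg σ
  rw [FidH, matSqrt_eq_sqrt hρ.nonneg, matSqrt_eq_sqrt hσ.nonneg,
    sq_lt_one_iff₀ (re_trace_mul_nonneg ha hb)]
  have hsqrt : CFC.sqrt ρ ≠ CFC.sqrt σ := fun h => hne (by
    rw [← CFC.sqrt_mul_sqrt_self ρ hρ.nonneg, h, CFC.sqrt_mul_sqrt_self σ hσ.nonneg])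
  have h := two_mul_re_trace_mul_lt_of_ne ha.isSelfAdjoint hb.isSelfAdjoint hsqrt
  rw [CFC.sqrt_mul_sqrt_self ρ hρ.nonneg, CFC.sqrt_mul_sqrt_self σ hσ.nonneg, hρ.2, hσ.2,
    Complex.one_re] at h
  linarith

theorem mul_mul_Fid_le_of_test {Λ : Matrix ι ι ℂ} (hρ : IsState ρ) (hσ : IsState σ) {p q : ℝ}
    (hp : 0 ≤ p) (hq : 0 ≤ q) (hpq : p + q = 1) (hΛ₀ : 0 ≤ Λ) (hΛ₁ : Λ ≤ 1) :
    p * q * Fid ρ σ ≤ p * ((1 - Λ) * ρ).trace.re + q * (Λ * σ).trace.re := by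
  set α := ((1 - Λ) * ρ).trace.re
  set β := (Λ * σ).trace.re
  have hα : 0 ≤ α := re_trace_mul_nonneg (sub_nonneg.mpr hΛ₁) hρ.nonneg
  have hβ : 0 ≤ β := re_trace_mul_nonneg hΛ₀ hσ.nonneg
  have hρ₁ := hρ.re_trace_mul_add_re_trace_one_sub_mul Λ
  have hσ₁ := hσ.re_trace_mul_add_re_trace_one_sub_mul Λ
  have hτ : traceNorm (matSqrt ρ * matSqrt σ) ≤ √α + √β := by
    have h := traceNorm_mul_le_of_test (CFC.sqrt_nonneg ρ) (CFC.sqrt_nonneg σ) hΛ₀ hΛ₁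
    rw [CFC.sqrt_mul_sqrt_self ρ hρ.nonneg, CFC.sqrt_mul_sqrt_self σ hσ.nonneg] at h
    rw [matSqrt_eq_sqrt hρ.nonneg, matSqrt_eq_sqrt hσ.nonneg]
    refine h.trans (add_comm √α √β ▸ add_le_add (Real.sqrt_le_sqrt ?_) (Real.sqrt_le_sqrt ?_))
    · nlinarith [re_trace_mul_nonneg hΛ₀ hρ.nonneg]
    · nlinarith [re_trace_mul_nonneg (sub_nonneg.mpr hΛ₁) hσ.nonneg]
  have hF : Fid ρ σ ≤ (√α + √β) ^ 2 := pow_le_pow_left₀ (traceNorm_nonneg _) hτ 2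
  have hgap : p * q * (√α + √β) ^ 2 + (p * √α - q * √β) ^ 2 = p * α + q * β := by
    linear_combination (p * √α ^ 2 + q * √β ^ 2) * hpq + p * Real.sq_sqrt hα + q * Real.sq_sqrt hβ
  nlinarith [mul_le_mul_of_nonneg_left hF (mul_nonneg hp hq), sq_nonneg (p * √α - q * √β)]

theorem exists_test_le_sqrt_mul_sqrt_FidH (hρ : 0 ≤ ρ) (hσ : 0 ≤ σ) {p q : ℝ} (hp : 0 ≤ p)
    (hq : 0 ≤ q) :
    ∃ Λ : Matrix ι ι ℂ, 0 ≤ Λ ∧ Λ ≤ 1 ∧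
      p * ((1 - Λ) * ρ).trace.re + q * (Λ * σ).trace.re ≤ √(p * q) * √(FidH ρ σ) := by
  obtain ⟨Λ, hΛ₀, hΛ₁, h⟩ :=
    exists_test_le_re_trace_sqrt_mul_sqrt (smul_nonneg hp hρ) (smul_nonneg hq hσ)
  refine ⟨Λ, hΛ₀, hΛ₁, ?_⟩
  rw [sqrt_smul hp hρ, sqrt_smul hq hσ, smul_mul_smul, mul_smul_comm, mul_smul_comm] at h
  simp only [trace_smul, Complex.smul_re, smul_eq_mul] at h
  rwa [sqrt_FidH hρ hσ, matSqrt_eq_sqrt hρ, matSqrt_eq_sqrt hσ, Real.sqrt_mul hp]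

end Fidelity

section SampleComplexity

theorem mul_pow_natCeil_le {c s ε : ℝ} (hc : 0 < c) (hε : 0 < ε) (hs₀ : 0 < s) (hs₁ : s < 1) :
    c * s ^ ⌈Real.log (c / ε) / -Real.log s⌉₊ ≤ ε := by
  set m := ⌈Real.log (c / ε) / -Real.log s⌉₊
  have hlog : Real.log s < 0 := Real.log_neg hs₀ hs₁
  have hm : Real.log (c / ε) ≤ m * -Real.log s :=
    (div_le_iff₀ (neg_pos.mpr hlog)).mp (Nat.le_ceil _)
  rw [Real.log_div hc.ne' hε.ne'] at hm
  rw [← Real.log_le_log_iff (by positivity) hε, Real.log_mul hc.ne' (pow_ne_zero _ hs₀.ne'),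
    Real.log_pow]
  linarith

theorem div_neg_log_le_of_mul_pow_le {c G ε : ℝ} {n : ℕ} (hc : 0 < c) (hε : 0 < ε) (hG₀ : 0 < G)
    (hG₁ : G < 1) (h : c * G ^ n ≤ ε) : Real.log (c / ε) / -Real.log G ≤ n := by
  have hlog : Real.log G < 0 := Real.log_neg hG₀ hG₁
  have h' := Real.log_le_log (by positivity) h
  rw [Real.log_mul hc.ne' (pow_ne_zero _ hG₀.ne'), Real.log_pow] at h'
  rw [div_le_iff₀ (neg_pos.mpr hlog), Real.log_div hc.ne' hε.ne']
  linarith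

variable {d : ℕ} {ρ σ : Matrix (Fin d) (Fin d) ℂ} {p q ε : ℝ}

theorem pErr_le_of_test (hρ : IsState ρ) (hσ : IsState σ) (hp : 0 ≤ p) (hq : 0 ≤ q) {n : ℕ}
    {Λ : Matrix (Fin n → Fin d) (Fin n → Fin d) ℂ} (hΛ₀ : 0 ≤ Λ) (hΛ₁ : Λ ≤ 1) :
    pErr p ρ q σ n
      ≤ p * ((1 - Λ) * tensorPow ρ n).trace.re + q * (Λ * tensorPow σ n).trace.re := by
  refine csInf_le ⟨0, ?_⟩ ⟨Λ, nonneg_iff_posSemidef.mp hΛ₀, le_iff.mp hΛ₁, rfl⟩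
  rintro x ⟨Λ', hΛ'₀, hΛ'₁, rfl⟩
  have h₁ := re_trace_mul_nonneg (nonneg_iff_posSemidef.mpr hΛ'₁) (hρ.tensorPow n).nonneg
  have h₂ := re_trace_mul_nonneg (nonneg_iff_posSemidef.mpr hΛ'₀) (hσ.tensorPow n).nonneg
  positivity

theorem pErr_le_sqrt_mul_sqrt_FidH_pow (hρ : IsState ρ) (hσ : IsState σ) (hp : 0 ≤ p)
    (hq : 0 ≤ q) (n : ℕ) : pErr p ρ q σ n ≤ √(p * q) * √(FidH ρ σ) ^ n := by
  obtain ⟨Λ, hΛ₀, hΛ₁, h⟩ :=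
    exists_test_le_sqrt_mul_sqrt_FidH (hρ.tensorPow n).nonneg (hσ.tensorPow n).nonneg hp hq
  rw [FidH_tensorPow hρ.nonneg hσ.nonneg, Real.sqrt_pow (x := FidH ρ σ) (sq_nonneg _)] at h
  exact (pErr_le_of_test hρ hσ hp hq hΛ₀ hΛ₁).trans h

theorem mul_mul_Fid_pow_le_pErr (hρ : IsState ρ) (hσ : IsState σ) (hp : 0 ≤ p) (hq : 0 ≤ q)
    (hpq : p + q = 1) (n : ℕ) : p * q * Fid ρ σ ^ n ≤ pErr p ρ q σ n := by
  refine le_csInf ⟨_, 0, PosSemidef.zero, by simpa using PosSemidef.one, rfl⟩ ?_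
  rintro x ⟨Λ, hΛ₀, hΛ₁, rfl⟩
  rw [← Fid_tensorPow hρ.nonneg hσ.nonneg]
  exact mul_mul_Fid_le_of_test (hρ.tensorPow n) (hσ.tensorPow n) hp hq hpq
    (nonneg_iff_posSemidef.mpr hΛ₀) (le_iff.mpr hΛ₁)

/-- At `p = q = 1/2` the optimal error lies between `F^n / 4` and `√F_H^n / 2 → 0`. -/
theorem Fid_lt_one (hρ : IsState ρ) (hσ : IsState σ) (hne : ρ ≠ σ) : Fid ρ σ < 1 := by
  by_contra! hF
  have hs : √(FidH ρ σ) < 1 := (Real.sqrt_lt' one_pos).mpr (by simpa using FidH_lt_one hρ hσ hne)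
  obtain ⟨n, hn⟩ := exists_pow_lt_of_lt_one (by norm_num : (0 : ℝ) < 1 / 2) hs
  have hlow := mul_mul_Fid_pow_le_pErr hρ hσ (p := 1 / 2) (q := 1 / 2) (by norm_num)
    (by norm_num) (by norm_num) n
  have hupp := pErr_le_sqrt_mul_sqrt_FidH_pow hρ hσ (p := 1 / 2) (q := 1 / 2) (by norm_num)
    (by norm_num) n
  have hhalf : √((1 / 2 : ℝ) * (1 / 2)) = 1 / 2 := by
    rw [← sq, Real.sqrt_sq (by norm_num)]
  rw [hhalf] at hupp
  nlinarith [one_le_pow₀ (n := n) hF]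

theorem sampleComplexity_le {m : ℕ} (hm₁ : 1 ≤ m) (hm : pErr p ρ q σ m ≤ ε) :
    sampleComplexity p ρ q σ ε ≤ m :=
  Nat.sInf_le (s := {n | 1 ≤ n ∧ pErr p ρ q σ n ≤ ε}) ⟨hm₁, hm⟩

theorem pErr_sampleComplexity_le {m : ℕ} (hm₁ : 1 ≤ m) (hm : pErr p ρ q σ m ≤ ε) :
    pErr p ρ q σ (sampleComplexity p ρ q σ ε) ≤ ε :=
  (Nat.sInf_mem (s := {n | 1 ≤ n ∧ pErr p ρ q σ n ≤ ε}) ⟨m, hm₁, hm⟩).2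

theorem sampleComplexity_bounds {G : ℝ} (hρ : IsState ρ) (hσ : IsState σ) (hp : 0 < p)
    (hq : 0 < q) (hpq : p + q = 1) (hε : 0 < ε) (hεpq : ε < √(p * q)) (hG₀ : 0 < G)
    (hG₁ : G < 1) (hFH : FidH ρ σ ≤ G) (hF : G ≤ Fid ρ σ) :
    Real.log (p * q / ε) / -Real.log G ≤ sampleComplexity p ρ q σ ε ∧
      (sampleComplexity p ρ q σ ε : ℤ)
        ≤ ⌈Real.log (√(p * q) / ε) / (-(1 / 2) * Real.log G)⌉ := by
  have hc : 0 < √(p * q) := hε.trans hεpq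
  have hs₀ : 0 < √G := Real.sqrt_pos.mpr hG₀
  have hs₁ : √G < 1 := (Real.sqrt_lt' one_pos).mpr (by simpa using hG₁)
  have hden : -(1 / 2) * Real.log G = -Real.log √G := by rw [Real.log_sqrt hG₀.le]; ring
  have hL : 0 < Real.log (√(p * q) / ε) / -Real.log √G :=
    div_pos (Real.log_pos ((one_lt_div hε).mpr hεpq)) (neg_pos.mpr (Real.log_neg hs₀ hs₁))
  set m := ⌈Real.log (√(p * q) / ε) / -Real.log √G⌉₊
  have hm₁ : 1 ≤ m := Nat.one_le_iff_ne_zero.mpr (Nat.ceil_pos.mpr hL).ne'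
  have hm : pErr p ρ q σ m ≤ ε := calc
    pErr p ρ q σ m ≤ √(p * q) * √(FidH ρ σ) ^ m :=
      pErr_le_sqrt_mul_sqrt_FidH_pow hρ hσ hp.le hq.le m
    _ ≤ √(p * q) * √G ^ m := by gcongr
    _ ≤ ε := mul_pow_natCeil_le hc hε hs₀ hs₁
  refine ⟨div_neg_log_le_of_mul_pow_le (mul_pos hp hq) hε hG₀ hG₁ ?_, ?_⟩
  · calc p * q * G ^ sampleComplexity p ρ q σ ε
        ≤ p * q * Fid ρ σ ^ sampleComplexity p ρ q σ ε := by gcongr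
      _ ≤ pErr p ρ q σ (sampleComplexity p ρ q σ ε) :=
        mul_mul_Fid_pow_le_pErr hρ hσ hp.le hq.le hpq _
      _ ≤ ε := pErr_sampleComplexity_le hm₁ hm
  · rw [hden, ← Int.natCast_ceil_eq_ceil hL.le]
    exact_mod_cast sampleComplexity_le hm₁ hm

end SampleComplexity

/-- **Two-sided fidelity characterization** of the sample complexity of
symmetric binary quantum hypothesis testing, in terms of the Holevo fidelity
and of the fidelity. -/
theorem sample_complexity_fidelity_bounds {d : ℕ} (ρ σ : Matrix (Fin d) (Fin d) ℂ)
    (hρ : IsState ρ) (hσ : IsState σ) (hne : ρ ≠ σ) (hnorth : ρ * σ ≠ 0)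
    (p q ε : ℝ) (hp : p ∈ Set.Ioo (0 : ℝ) 1) (hq : q = 1 - p)
    (hε : ε ∈ Set.Ioo 0 (min p q)) :
    (Real.log (p * q / ε) / (-Real.log (FidH ρ σ)) ≤ (sampleComplexity p ρ q σ ε : ℝ) ∧
      (sampleComplexity p ρ q σ ε : ℤ)
        ≤ ⌈Real.log (Real.sqrt (p * q) / ε) / (-(1 / 2) * Real.log (FidH ρ σ))⌉) ∧
    (Real.log (p * q / ε) / (-Real.log (Fid ρ σ)) ≤ (sampleComplexity p ρ q σ ε : ℝ) ∧
      (sampleComplexity p ρ q σ ε : ℤ)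
        ≤ ⌈Real.log (Real.sqrt (p * q) / ε) / (-(1 / 2) * Real.log (Fid ρ σ))⌉) := by
  obtain ⟨hp₀, hp₁⟩ := hp
  obtain ⟨hε₀, hεpq⟩ := hε
  have hq₀ : 0 < q := by linarith
  have hpq : p + q = 1 := by linarith
  have hεc : ε < √(p * q) := hεpq.trans_le <|
    (Real.le_sqrt (le_min hp₀.le hq₀.le) (mul_pos hp₀ hq₀).le).mpr <| by
      rw [sq]; exact mul_le_mul (min_le_left p q) (min_le_right p q) (le_min hp₀.le hq₀.le) hp₀.le
  have hFH₀ := FidH_pos hρ.nonneg hσ.nonneg hnorth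
  have hFHF := FidH_le_Fid hρ.nonneg hσ.nonneg
  have hF₁ := Fid_lt_one hρ hσ hne
  exact ⟨sampleComplexity_bounds hρ hσ hp₀ hq₀ hpq hε₀ hεc hFH₀ (hFHF.trans_lt hF₁) le_rfl hFHF,
    sampleComplexity_bounds hρ hσ hp₀ hq₀ hpq hε₀ hεc (hFH₀.trans_le hFHF) hF₁ hFHF le_rfl⟩

end QHT

end
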